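/- Plan-length correspondence in partial-space search: if π = a₁,…,aₘ is a valid plan for Π in which aᵢ has arity kᵢ (number of schema parameters), then the root-to-goal path in partial-space search obtained by decomposing each plan action into its chain of partial actions of increasing specificity visits exactly Σ_{i=1}^{m}(kᵢ + 2) successor steps, i.e., consists of 1 + Σ_{i=1}^{m}(kᵢ + 2) nodes, and ends at a node ⟨s,⊥⟩ with G ⊆ s. -/

import Mathlib

namespace PS

/-- A lifted planning task: atoms, action schemas with arities, objects,
preconditions/add/delete effects of ground instantiations, initial state and goal. -/
structure LiftedTask where
  Atom : Type
  Schema : Type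
  Obj : Type
  arity : Schema → ℕ
  pre : Schema → List Obj → Set Atom
  add : Schema → List Obj → Set Atom
  del : Schema → List Obj → Set Atom
  init : Set Atom
  goal : Set Atom

/-- A ground action: a schema with a full list of instantiating objects. -/
abbrev GroundAction (T : LiftedTask) :=
  { p : T.Schema × List T.Obj // p.2.length = T.arity p.1 }

/-- A partial action: `none` is ⊥; otherwise a schema with a prefix of instantiating objects. -/
abbrev PartialAction (T : LiftedTask) :=
  Option { p : T.Schema × List T.Obj // p.2.length ≤ T.arity p.1 }

/-- `a` is applicable in state `s` iff `pre(a) ⊆ s`. -/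
def Applicable (T : LiftedTask) (a : GroundAction T) (s : Set T.Atom) : Prop :=
  T.pre a.val.1 a.val.2 ⊆ s

/-- `succ(s,a) = (s \ del(a)) ∪ add(a)`. -/
def applySucc (T : LiftedTask) (s : Set T.Atom) (a : GroundAction T) : Set T.Atom :=
  (s \ T.del a.val.1 a.val.2) ∪ T.add a.val.1 a.val.2

/-- A ground action viewed as a (fully instantiated) partial action. -/
def toPartial (T : LiftedTask) (a : GroundAction T) : PartialAction T :=
  some ⟨a.val, le_of_eq a.prop⟩

/-- A partial action is fully instantiated iff all schema parameters are instantiated. -/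
def isFull (T : LiftedTask) : PartialAction T → Prop
  | none => False
  | some p => p.val.2.length = T.arity p.val.1

/-- `𝒜^ρ`: the set of ground actions in the subtree rooted at `ρ` of the partial action tree. -/
def subtree (T : LiftedTask) : PartialAction T → Set (GroundAction T)
  | none => Set.univ
  | some p => {a : GroundAction T | a.val.1 = p.val.1 ∧ p.val.2 <+: a.val.2}

/-- `ρ` is applicable in `s` iff `𝒜^ρ_s = 𝒜^ρ ∩ 𝒜_s ≠ ∅`. -/
def ApplicableP (T : LiftedTask) (ρ : PartialAction T) (s : Set T.Atom) : Prop :=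
  ∃ a ∈ subtree T ρ, Applicable T a s

/-- The child relation of the partial action tree. -/
def Child (T : LiftedTask) : PartialAction T → PartialAction T → Prop
  | none, some p' => p'.val.2 = []
  | some p, some p' => p.val.1 = p'.val.1 ∧ ∃ o : T.Obj, p'.val.2 = p.val.2 ++ [o]
  | _, none => False

/-- A partial-space search node: a state and a partial action. -/
abbrev Node (T : LiftedTask) := Set T.Atom × PartialAction T

/-- The successor relation of partial-space search. -/
inductive Succ (T : LiftedTask) : Node T → Node T → Prop
  | refine {s : Set T.Atom} {ρ ρ' : PartialAction T} :
      Child T ρ ρ' → ApplicableP T ρ' s → Succ T (s, ρ) (s, ρ')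
  | finish {s : Set T.Atom} (a : GroundAction T) :
      Succ T (s, toPartial T a) (applySucc T s a, (none : PartialAction T))

/-- `IsPlanFrom T s π`: `π` is a valid plan starting from state `s`. -/
inductive IsPlanFrom (T : LiftedTask) : Set T.Atom → List (GroundAction T) → Prop
  | nil {s : Set T.Atom} : T.goal ⊆ s → IsPlanFrom T s []
  | cons {s : Set T.Atom} {a : GroundAction T} {l : List (GroundAction T)} :
      Applicable T a s → IsPlanFrom T (applySucc T s a) l → IsPlanFrom T s (a :: l)

/-- The ground action corresponding to a fully instantiated partial action, if any. -/
def groundOf? (T : LiftedTask) : PartialAction T → Option (GroundAction T)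
  | none => none
  | some p => if h : p.val.2.length = T.arity p.val.1 then some ⟨p.val, h⟩ else none

/-- The ordered subsequence of fully instantiated partial actions in a node sequence. -/
def extractPlan (T : LiftedTask) (l : List (Node T)) : List (GroundAction T) :=
  l.filterMap fun n => groundOf? T n.2

/-- The partial action instantiating the first `j` parameters of the ground action `a`. -/
def prefixPA (T : LiftedTask) (a : GroundAction T) (j : ℕ) : PartialAction T :=
  some ⟨(a.val.1, a.val.2.take j), by
    rw [List.length_take]
    exact (min_le_right _ _).trans a.prop.le⟩

/-- The parent map of the partial action tree (sends ⊥ to ⊥). -/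
def parentPA (T : LiftedTask) : PartialAction T → PartialAction T
  | none => none
  | some p =>
      if p.val.2.isEmpty then none
      else some ⟨(p.val.1, p.val.2.dropLast), by
        rw [List.length_dropLast]
        exact (Nat.sub_le _ _).trans p.prop⟩

/-- Specificity: `0` for ⊥, `j+1` for a partial action with `j` instantiated parameters. -/
def spec (T : LiftedTask) : PartialAction T → ℕ
  | none => 0
  | some p => p.val.2.length + 1

/-- The canonical root-to-goal path obtained by decomposing each plan action into its
chain of partial actions of increasing specificity. -/
def planPath (T : LiftedTask) : Set T.Atom → List (GroundAction T) → List (Node T)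
  | s, [] => [(s, (none : PartialAction T))]
  | s, a :: π =>
      ((s, (none : PartialAction T)) ::
        (List.range (T.arity a.val.1 + 1)).map fun j => (s, prefixPA T a j)) ++
        planPath T (applySucc T s a) π

/-- `ρ` lies on the unique chain from ⊥ to the ground action `a` in the partial action tree. -/
def OnChain (T : LiftedTask) (ρ : PartialAction T) (a : GroundAction T) : Prop :=
  ρ = none ∨ ∃ j ≤ T.arity a.val.1, ρ = prefixPA T a j

variable {T : LiftedTask}

theorem prefixPA_arity (a : GroundAction T) :
    prefixPA T a (T.arity a.val.1) = toPartial T a := by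
  simp only [prefixPA, toPartial, ← a.prop, List.take_length]

theorem Succ.bot_prefixPA_zero {s : Set T.Atom} {a : GroundAction T} (ha : Applicable T a s) :
    Succ T (s, none) (s, prefixPA T a 0) :=
  .refine (by simp [Child, prefixPA]) ⟨a, ⟨rfl, List.nil_prefix⟩, ha⟩

theorem Succ.prefixPA_succ {s : Set T.Atom} {a : GroundAction T} {j : ℕ}
    (hj : j < T.arity a.val.1) (ha : Applicable T a s) :
    Succ T (s, prefixPA T a j) (s, prefixPA T a (j + 1)) := by
  have hj' : j < a.val.2.length := a.prop ▸ hj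
  refine .refine ⟨rfl, a.val.2[j], ?_⟩ ⟨a, ⟨rfl, List.take_prefix _ _⟩, ha⟩
  exact List.take_succ_eq_append_getElem hj'

def decompositionPath (T : LiftedTask) (s : Set T.Atom) (a : GroundAction T) : List (Node T) :=
  (s, none) :: (List.range (T.arity a.val.1 + 1)).map fun j => (s, prefixPA T a j)

theorem length_decompositionPath (s : Set T.Atom) (a : GroundAction T) :
    (decompositionPath T s a).length = T.arity a.val.1 + 2 := by
  simp [decompositionPath]

theorem getLast?_decompositionPath (s : Set T.Atom) (a : GroundAction T) :
    (decompositionPath T s a).getLast? = some (s, toPartial T a) := by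
  rw [decompositionPath, List.range_succ, List.map_append, List.map_singleton, prefixPA_arity,
    ← List.cons_append, List.getLast?_concat]

theorem isChain_decompositionPath {s : Set T.Atom} {a : GroundAction T} (ha : Applicable T a s) :
    (decompositionPath T s a).IsChain (Succ T) := by
  rw [decompositionPath, List.isChain_cons, List.isChain_map, List.isChain_range_succ]
  refine ⟨fun y hy => ?_, fun j hj => .prefixPA_succ hj ha⟩
  simp only [List.head?_map, List.head?_range, Nat.add_one_ne_zero, if_false, Option.map_some,
    Option.mem_some_iff] at hy
  exact hy ▸ .bot_prefixPA_zero ha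

theorem planPath_cons (s : Set T.Atom) (a : GroundAction T) (π : List (GroundAction T)) :
    planPath T s (a :: π) = decompositionPath T s a ++ planPath T (applySucc T s a) π :=
  rfl

theorem head?_planPath (s : Set T.Atom) (π : List (GroundAction T)) :
    (planPath T s π).head? = some (s, none) := by
  cases π <;> rfl

theorem length_planPath (s : Set T.Atom) (π : List (GroundAction T)) :
    (planPath T s π).length = 1 + (π.map fun a => T.arity a.val.1 + 2).sum := by
  induction π generalizing s with
  | nil => rfl
  | cons a π ih =>
    rw [planPath_cons, List.length_append, length_decompositionPath, ih, List.map_cons,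
      List.sum_cons]
    omega

theorem getLast?_planPath (s : Set T.Atom) (π : List (GroundAction T)) :
    (planPath T s π).getLast? = some (π.foldl (applySucc T) s, none) := by
  induction π generalizing s with
  | nil => rfl
  | cons a π ih => rw [planPath_cons, List.getLast?_append, ih]; rfl

theorem IsPlanFrom.goal_subset_foldl {s : Set T.Atom} {π : List (GroundAction T)}
    (h : IsPlanFrom T s π) : T.goal ⊆ π.foldl (applySucc T) s := by
  induction h with
  | nil hg => exact hg
  | cons _ _ ih => exact ih

/-- Every partial action of a block is applicable because its subtree contains the applicable
action `a`; the block ends at `⟨s, a⟩`, whose successor `⟨succ(s,a), ⊥⟩` starts the next block. -/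
theorem IsPlanFrom.isChain_planPath {s : Set T.Atom} {π : List (GroundAction T)}
    (h : IsPlanFrom T s π) : (planPath T s π).IsChain (Succ T) := by
  induction h with
  | nil _ => exact List.isChain_singleton _
  | @cons s a π ha _ ih =>
    refine (isChain_decompositionPath ha).append ih fun x hx y hy => ?_
    rw [getLast?_decompositionPath, Option.mem_some_iff] at hx
    rw [head?_planPath, Option.mem_some_iff] at hy
    exact hx ▸ hy ▸ .finish a

/-- **Plan-length correspondence**: the root-to-goal path obtained by decomposing each
action of a valid plan `π = a₁,…,aₘ` into its chain of partial actions of increasing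
specificity is a successor sequence from the root consisting of `1 + Σᵢ (kᵢ + 2)` nodes
(i.e. `Σᵢ (kᵢ + 2)` successor steps), ending at a node `⟨s,⊥⟩` with `G ⊆ s`. -/
theorem plan_length_correspondence (T : LiftedTask) (π : List (GroundAction T))
    (hπ : IsPlanFrom T T.init π) :
    List.Chain' (Succ T) (planPath T T.init π) ∧
    (planPath T T.init π).head? = some (T.init, (none : PartialAction T)) ∧
    (planPath T T.init π).length = 1 + (π.map fun a => T.arity a.val.1 + 2).sum ∧
    ∃ s : Set T.Atom,
      (planPath T T.init π).getLast? = some (s, (none : PartialAction T)) ∧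
      T.goal ⊆ s :=
  ⟨hπ.isChain_planPath, head?_planPath _ _, length_planPath _ _, _, getLast?_planPath _ _,
    hπ.goal_subset_foldl⟩

end PS
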